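/- Let X, Y ⊆ ω. If there exists an embedding of pcas of K2^X into K1^Y, then the Turing jump X' is Turing reducible to Y. -/

import Mathlib

namespace PCAEmb

/-! ### Oracle computability -/

/-- Codes for partial functions computable relative to an oracle. -/
inductive OCode : Type
  | zero : OCode
  | succ : OCode
  | left : OCode
  | right : OCode
  | oracle : OCode
  | pair : OCode → OCode → OCode
  | comp : OCode → OCode → OCode
  | prec : OCode → OCode → OCode
  | rfind' : OCode → OCode

/-- Evaluation of an oracle code, relative to a (partial) oracle `O`. -/
def evalo (O : ℕ →. ℕ) : OCode → ℕ →. ℕ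
  | .zero => pure 0
  | .succ => Nat.succ
  | .left => ↑fun n : ℕ => n.unpair.1
  | .right => ↑fun n : ℕ => n.unpair.2
  | .oracle => O
  | .pair cf cg => fun n => Nat.pair <$> evalo O cf n <*> evalo O cg n
  | .comp cf cg => fun n => evalo O cg n >>= evalo O cf
  | .prec cf cg =>
      Nat.unpaired fun a n =>
        n.rec (evalo O cf a) fun y IH => do
          let i ← IH
          evalo O cg (Nat.pair a (Nat.pair y i))
  | .rfind' cf =>
      Nat.unpaired fun a m =>
        (Nat.rfind fun n => (fun x => x = 0) <$> evalo O cf (Nat.pair a (n + m))).map (· + m)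

/-- The standard numbering of oracle codes. -/
def OCode.ofNat : ℕ → OCode
  | 0 => .zero
  | 1 => .succ
  | 2 => .left
  | 3 => .right
  | 4 => .oracle
  | n + 5 =>
    match n % 4 with
    | 0 => .pair (OCode.ofNat (n / 4).unpair.1) (OCode.ofNat (n / 4).unpair.2)
    | 1 => .comp (OCode.ofNat (n / 4).unpair.1) (OCode.ofNat (n / 4).unpair.2)
    | 2 => .prec (OCode.ofNat (n / 4).unpair.1) (OCode.ofNat (n / 4).unpair.2)
    | _ => .rfind' (OCode.ofNat (n / 4).unpair.1)
  decreasing_by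
    all_goals
      have h1 := Nat.unpair_left_le (n / 4)
      have h2 := Nat.unpair_right_le (n / 4)
      have h3 := Nat.div_le_self n 4
      omega

/-- The `e`-th Turing functional with oracle `O` : `Φ_e^O`. -/
def phi (O : ℕ →. ℕ) (e : ℕ) : ℕ →. ℕ := evalo O (OCode.ofNat e)

/-- The characteristic function of a set of naturals, as a (total) partial function. -/
noncomputable def chi (X : Set ℕ) : ℕ →. ℕ :=
  fun n => Part.some (X.indicator (fun _ => 1) n)

/-- `ψ` is partial computable relative to the oracle `O`. -/
def RecursiveIn (O : ℕ →. ℕ) (ψ : ℕ →. ℕ) : Prop := ∃ c : OCode, evalo O c = ψ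

/-- Turing reducibility of sets of naturals. -/
def TuringLE (X Y : Set ℕ) : Prop := RecursiveIn (chi Y) (chi X)

/-- A total function `d : ℕ → ℕ` is `Y`-computable. -/
def ComputableIn (Y : Set ℕ) (d : ℕ → ℕ) : Prop :=
  RecursiveIn (chi Y) (fun n => Part.some (d n))

/-- A binary relation on `ℕ` is `Y`-c.e. -/
def CEIn (Y : Set ℕ) (R : ℕ → ℕ → Prop) : Prop :=
  ∃ c : OCode, ∀ n m, R n m ↔ (evalo (chi Y) c (Nat.pair n m)).Dom

/-- A set `W ⊆ ℕ` is `Y`-c.e. -/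
def CE1In (Y : Set ℕ) (W : Set ℕ) : Prop :=
  ∃ c : OCode, ∀ n, n ∈ W ↔ (evalo (chi Y) c n).Dom

/-- The canonical finite set `D_u` with code `u` (binary coding). -/
def Du (u : ℕ) : Set ℕ := {k | u.testBit k}

/-- Enumeration reducibility: `Z ≤ₑ Y`. -/
def EnumLE (Z Y : Set ℕ) : Prop :=
  ∃ W : Set ℕ, CE1In ∅ W ∧ ∀ x, x ∈ Z ↔ ∃ u, Nat.pair x u ∈ W ∧ Du u ⊆ Y

/-- The Turing jump `X'` of a set `X`. -/
def jump (X : Set ℕ) : Set ℕ := {e | (phi (chi X) e e).Dom}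

/-- The halting set `K = {e : φ_e(e)↓}`. -/
def Khalt : Set ℕ := jump ∅

/-! ### Partial combinatory algebras -/

/-- `k·a·b` as a partial element. -/
def app2 {α : Type*} (app : α → α → Part α) (a b c : α) : Part α :=
  (app a b).bind fun x => app x c

/-- `s·a·b·c` as a partial element. -/
def app3 {α : Type*} (app : α → α → Part α) (a b c d : α) : Part α :=
  (app2 app a b c).bind fun x => app x d

/-- A partial applicative structure is a pca if it has (distinct) combinators `s` and `k`. -/
def IsPCA {α : Type*} (app : α → α → Part α) : Prop :=
  ∃ s k : α, s ≠ k ∧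
    (∀ a b : α, app2 app k a b = Part.some a) ∧
    (∀ a b : α, (app2 app s a b).Dom) ∧
    (∀ a b c : α,
      app3 app s a b c = (app a c).bind fun x => (app b c).bind fun y => app x y)

/-- An embedding of partial combinatory algebras: an injection that preserves
(defined) application. -/
def IsPCAEmbedding {α β : Type*} (appA : α → α → Part α) (appB : β → β → Part β)
    (f : α → β) : Prop :=
  Function.Injective f ∧ ∀ a a' c : α, c ∈ appA a a' → f c ∈ appB (f a) (f a')

/-! ### Partial numberings -/

/-- `γ : ℕ ⇀ α` is a partial numbering (i.e. surjective). -/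
def IsNumbering {α : Type*} (γ : ℕ →. α) : Prop := ∀ a : α, ∃ n, a ∈ γ n

/-- `d` is an `(a⊥, a⊤)`-decider for `X` with respect to `γ`. -/
def IsDecider {α : Type*} (γ : ℕ →. α) (abot atop : α) (X : Set ℕ) (d : ℕ → ℕ) : Prop :=
  ∀ n, (n ∉ X → γ (d n) = Part.some abot) ∧ (n ∈ X → γ (d n) = Part.some atop)

/-- `γ` has `Y`-c.e. inequivalence. -/
def CEInequiv {α : Type*} (Y : Set ℕ) (γ : ℕ →. α) : Prop :=
  ∃ R : ℕ → ℕ → Prop, CEIn Y R ∧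
    ∀ n m, (γ n).Dom → (γ m).Dom → (R n m ↔ γ n ≠ γ m)

/-- `γ` is a `Y`-effectively pca-valued partial numbering: the application is
represented on codes by a partial `Y`-computable function `ψ`. -/
def EffValued {α : Type*} (Y : Set ℕ) (app : α → α → Part α) (γ : ℕ →. α) : Prop :=
  ∃ ψ : ℕ →. ℕ, RecursiveIn (chi Y) ψ ∧
    ∀ (n m : ℕ) (a b c : α), a ∈ γ n → b ∈ γ m → c ∈ app a b →
      ∃ j, j ∈ ψ (Nat.pair n m) ∧ c ∈ γ j

/-- `γ` is a strongly `Y`-effectively pca-valued partial numbering. -/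
def StrongEffValued {α : Type*} (Y : Set ℕ) (app : α → α → Part α) (γ : ℕ →. α) : Prop :=
  ∃ ψ : ℕ →. ℕ, RecursiveIn (chi Y) ψ ∧
    (∀ (n m : ℕ) (a b c : α), a ∈ γ n → b ∈ γ m → c ∈ app a b →
      ∃ j, j ∈ ψ (Nat.pair n m) ∧ c ∈ γ j) ∧
    (∀ (n m k l : ℕ) (a b a' b' c : α), a ∈ γ n → b ∈ γ m → a' ∈ γ k → b' ∈ γ l →
      c ∈ app a b → c ∈ app a' b' → ψ (Nat.pair n m) = ψ (Nat.pair k l))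

/-! ### The models -/

/-- Kleene's first model relativized to `X`: application `n · m = Φ_n^X(m)`. -/
noncomputable def k1App (X : Set ℕ) : ℕ → ℕ → Part ℕ := fun n m => phi (chi X) n m

/-- A total function as a partial function. -/
def toPFun (g : ℕ → ℕ) : ℕ →. ℕ := fun n => Part.some (g n)

/-- Join `f ⊕ g` of two partial functions. -/
def pjoin (f g : ℕ →. ℕ) : ℕ →. ℕ := fun n =>
  if n % 2 = 0 then f (n / 2) else g (n / 2)

/-- The totalization of a partial function, as a partial element of `ℕ → ℕ`:
defined iff `ψ` is total. -/
def partToTotal (ψ : ℕ →. ℕ) : Part (ℕ → ℕ) :=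
  ⟨∀ n, (ψ n).Dom, fun H n => (ψ n).get (H n)⟩

/-- Application in Kleene's second model `K₂`: `g · h = Φ^{g⊕h}_{g 0}`,
defined iff this function is total. -/
def k2App (g h : ℕ → ℕ) : Part (ℕ → ℕ) :=
  partToTotal (phi (pjoin (toPFun g) (toPFun h)) (g 0))

/-- Application in van Oosten's sequential model `B`: `θ · ρ = Φ^{θ⊕ρ}_{θ 0}`
(always defined, as a partial function). -/
def bApp (θ ρ : ℕ →. ℕ) : Part (ℕ →. ℕ) :=
  Part.some (fun n => (θ 0).bind fun e => phi (pjoin θ ρ) e n)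

/-- Restriction of a partial applicative structure to a subset. -/
def subApp {α : Type*} (app : α → α → Part α) (P : α → Prop)
    (a b : Subtype P) : Part (Subtype P) :=
  (app a.1 b.1).bind fun c => Part.assert (P c) fun h => Part.some ⟨c, h⟩

/-- Carrier of `K₂^X` : the total `X`-computable functions. -/
def K2el (X : Set ℕ) : Type := {g : ℕ → ℕ // RecursiveIn (chi X) (toPFun g)}

/-- Application in `K₂^X`. -/
def k2XApp (X : Set ℕ) : K2el X → K2el X → Part (K2el X) :=
  subApp k2App _

/-- Carrier of `B^X` : the partial `X`-computable functions. -/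
def Bel (X : Set ℕ) : Type := {θ : ℕ →. ℕ // RecursiveIn (chi X) θ}

/-- Application in `B^X`. -/
def bXApp (X : Set ℕ) : Bel X → Bel X → Part (Bel X) :=
  subApp bApp _

/-- Application in Scott's graph model `G`. -/
def gApp (A B : Set ℕ) : Part (Set ℕ) :=
  Part.some {n | ∃ u, Nat.pair n u ∈ A ∧ Du u ⊆ B}

/-- Carrier of `G^Z` : the sets enumeration-reducible to `Z`. -/
def Gel (Z : Set ℕ) : Type := {A : Set ℕ // EnumLE A Z}

/-- Application in `G^Z`. -/
def gXApp (Z : Set ℕ) : Gel Z → Gel Z → Part (Gel Z) :=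
  subApp gApp _

/-- `X ⊕ X̄ = {2n : n ∈ X} ∪ {2n+1 : n ∉ X}`. -/
def joinCompl (X : Set ℕ) : Set ℕ :=
  {k | ∃ n, (k = 2 * n ∧ n ∈ X) ∨ (k = 2 * n + 1 ∧ n ∉ X)}

/-! ### The λ-calculus -/

/-- Untyped λ-terms (de Bruijn representation). -/
inductive Lam : Type
  | var : ℕ → Lam
  | app : Lam → Lam → Lam
  | abs : Lam → Lam

/-- Lift (shift up) the free variables `≥ d` of a term. -/
def Lam.lift : Lam → ℕ → Lam
  | .var n, d => if n < d then .var n else .var (n + 1)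
  | .app M N, d => .app (M.lift d) (N.lift d)
  | .abs M, d => .abs (M.lift (d + 1))

/-- Substitution `M[k := N]` (de Bruijn). -/
def Lam.subst : Lam → ℕ → Lam → Lam
  | .var n, k, N => if n = k then N else if k < n then .var (n - 1) else .var n
  | .app M M', k, N => .app (M.subst k N) (M'.subst k N)
  | .abs M, k, N => .abs (M.subst (k + 1) (N.lift 0))

/-- β-equivalence of λ-terms. -/
inductive BetaEq : Lam → Lam → Prop
  | beta (M N : Lam) : BetaEq (.app (.abs M) N) (M.subst 0 N)
  | refl (M : Lam) : BetaEq M M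
  | symm {M N : Lam} : BetaEq M N → BetaEq N M
  | trans {M N P : Lam} : BetaEq M N → BetaEq N P → BetaEq M P
  | appCongr {M M' N N' : Lam} :
      BetaEq M M' → BetaEq N N' → BetaEq (.app M N) (.app M' N')
  | absCongr {M M' : Lam} : BetaEq M M' → BetaEq (.abs M) (.abs M')

/-- βη-equivalence of λ-terms. -/
inductive BetaEtaEq : Lam → Lam → Prop
  | beta (M N : Lam) : BetaEtaEq (.app (.abs M) N) (M.subst 0 N)
  | eta (M : Lam) : BetaEtaEq (.abs (.app (M.lift 0) (.var 0))) M
  | refl (M : Lam) : BetaEtaEq M M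
  | symm {M N : Lam} : BetaEtaEq M N → BetaEtaEq N M
  | trans {M N P : Lam} : BetaEtaEq M N → BetaEtaEq N P → BetaEtaEq M P
  | appCongr {M M' N N' : Lam} :
      BetaEtaEq M M' → BetaEtaEq N N' → BetaEtaEq (.app M N) (.app M' N')
  | absCongr {M M' : Lam} : BetaEtaEq M M' → BetaEtaEq (.abs M) (.abs M')

def lamBetaSetoid : Setoid Lam := ⟨BetaEq, ⟨BetaEq.refl, BetaEq.symm, BetaEq.trans⟩⟩

def lamBetaEtaSetoid : Setoid Lam :=
  ⟨BetaEtaEq, ⟨BetaEtaEq.refl, BetaEtaEq.symm, BetaEtaEq.trans⟩⟩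

/-- The pca `λ` of λ-terms modulo β-equivalence. -/
def LamBeta : Type := Quotient lamBetaSetoid

/-- The pca `λη` of λ-terms modulo βη-equivalence. -/
def LamBetaEta : Type := Quotient lamBetaEtaSetoid

/-- Application in `λ` (total). -/
def lamBetaApp : LamBeta → LamBeta → Part LamBeta := fun a b =>
  Part.some (Quotient.map₂ Lam.app (fun _ _ h1 _ _ h2 => BetaEq.appCongr h1 h2) a b)

/-- Application in `λη` (total). -/
def lamBetaEtaApp : LamBetaEta → LamBetaEta → Part LamBetaEta := fun a b =>
  Part.some (Quotient.map₂ Lam.app (fun _ _ h1 _ _ h2 => BetaEtaEq.appCongr h1 h2) a b)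


/-- Encoding of `OCode` matching `OCode.ofNat`. -/
def encO : OCode → ℕ
  | .zero => 0
  | .succ => 1
  | .left => 2
  | .right => 3
  | .oracle => 4
  | .pair cf cg => 4 * Nat.pair (encO cf) (encO cg) + 5
  | .comp cf cg => 4 * Nat.pair (encO cf) (encO cg) + 6
  | .prec cf cg => 4 * Nat.pair (encO cf) (encO cg) + 7
  | .rfind' cf => 4 * Nat.pair (encO cf) 0 + 8

theorem ofNat_encO : ∀ c, OCode.ofNat (encO c) = c := by
  intro c
  induction c with
  | zero => rw [encO, OCode.ofNat]
  | succ => rw [encO, OCode.ofNat]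
  | left => rw [encO, OCode.ofNat]
  | right => rw [encO, OCode.ofNat]
  | oracle => rw [encO, OCode.ofNat]
  | pair cf cg ihf ihg =>
      rw [encO, show 4 * Nat.pair (encO cf) (encO cg) + 5 = (4 * Nat.pair (encO cf) (encO cg)) + 5 from rfl,
        OCode.ofNat]
      simp [Nat.mul_mod_right, Nat.mul_div_cancel_left, ihf, ihg]
  | comp cf cg ihf ihg =>
      rw [encO, show 4 * Nat.pair (encO cf) (encO cg) + 6 = (4 * Nat.pair (encO cf) (encO cg) + 1) + 5 from rfl,
        OCode.ofNat]
      have h1 : (4 * Nat.pair (encO cf) (encO cg) + 1) % 4 = 1 := by omega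
      have h2 : (4 * Nat.pair (encO cf) (encO cg) + 1) / 4 = Nat.pair (encO cf) (encO cg) := by omega
      simp [h1, h2, ihf, ihg]
  | prec cf cg ihf ihg =>
      rw [encO, show 4 * Nat.pair (encO cf) (encO cg) + 7 = (4 * Nat.pair (encO cf) (encO cg) + 2) + 5 from rfl,
        OCode.ofNat]
      have h1 : (4 * Nat.pair (encO cf) (encO cg) + 2) % 4 = 2 := by omega
      have h2 : (4 * Nat.pair (encO cf) (encO cg) + 2) / 4 = Nat.pair (encO cf) (encO cg) := by omega
      simp [h1, h2, ihf, ihg]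
  | rfind' cf ihf =>
      rw [encO, show 4 * Nat.pair (encO cf) 0 + 8 = (4 * Nat.pair (encO cf) 0 + 3) + 5 from rfl,
        OCode.ofNat]
      have h1 : (4 * Nat.pair (encO cf) 0 + 3) % 4 = 3 := by omega
      have h2 : (4 * Nat.pair (encO cf) 0 + 3) / 4 = Nat.pair (encO cf) 0 := by omega
      simp [h1, h2, ihf]
/-- Every (plainly) partial recursive function has an `OCode`, uniformly in the oracle. -/
theorem exists_ocode_of_partrec {f : ℕ →. ℕ} (h : Nat.Partrec f) :
    ∃ c : OCode, ∀ O : ℕ →. ℕ, evalo O c = f := by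
  induction h with
  | zero => exact ⟨.zero, fun O => rfl⟩
  | succ => exact ⟨.succ, fun O => rfl⟩
  | left => exact ⟨.left, fun O => rfl⟩
  | right => exact ⟨.right, fun O => rfl⟩
  | pair hf hg ihf ihg =>
      obtain ⟨cf, hcf⟩ := ihf; obtain ⟨cg, hcg⟩ := ihg
      exact ⟨.pair cf cg, fun O => by funext n; simp [evalo, hcf O, hcg O]⟩
  | comp hf hg ihf ihg =>
      obtain ⟨cf, hcf⟩ := ihf; obtain ⟨cg, hcg⟩ := ihg
      exact ⟨.comp cf cg, fun O => by funext n; simp [evalo, hcf O, hcg O]⟩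
  | prec hf hg ihf ihg =>
      obtain ⟨cf, hcf⟩ := ihf; obtain ⟨cg, hcg⟩ := ihg
      exact ⟨.prec cf cg, fun O => by funext n; simp [evalo, hcf O, hcg O]⟩
  | rfind hf ihf =>
      obtain ⟨cf, hcf⟩ := ihf
      refine ⟨.comp (.rfind' cf) (.pair (.pair .left .right) .zero), fun O => ?_⟩
      funext n
      simp [evalo, hcf O, Seq.seq, pure, PFun.pure, Part.map_id']

theorem recursiveIn_of_partrec {f : ℕ →. ℕ} (h : Nat.Partrec f) (O : ℕ →. ℕ) :
    RecursiveIn O f := by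
  obtain ⟨c, hc⟩ := exists_ocode_of_partrec h
  exact ⟨c, hc O⟩

theorem nat_partrec_of_computable {f : ℕ → ℕ} (h : Computable f) :
    Nat.Partrec (fun n => Part.some (f n)) := by
  exact Partrec.nat_iff.1 h.partrec

theorem recursiveIn_of_computable {f : ℕ → ℕ} (h : Computable f) (O : ℕ →. ℕ) :
    RecursiveIn O (fun n => Part.some (f n)) :=
  recursiveIn_of_partrec (nat_partrec_of_computable h) O
/-! ### Oracle monotonicity and compactness -/

theorem part_map_mono {β : Type} {g : ℕ → β} {q q' : Part ℕ}
    (hq : ∀ a, a ∈ q → a ∈ q') {b : β} (h : b ∈ g <$> q) : b ∈ g <$> q' := by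
  rw [Part.map_eq_map, Part.mem_map_iff] at h ⊢
  obtain ⟨a, ha, rfl⟩ := h
  exact ⟨a, hq a ha, rfl⟩

theorem evalo_mono {O O' : ℕ →. ℕ} (hO : ∀ n a, a ∈ O n → a ∈ O' n) :
    ∀ (c : OCode) (x a : ℕ), a ∈ evalo O c x → a ∈ evalo O' c x := by
  intro c
  induction c with
  | zero => exact fun x a h => h
  | succ => exact fun x a h => h
  | left => exact fun x a h => h
  | right => exact fun x a h => h
  | oracle => exact fun x a h => hO x a h
  | pair cf cg ihf ihg =>
      intro x a h
      simp only [evalo, Seq.seq] at h ⊢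
      rw [Part.mem_bind_iff] at h ⊢
      obtain ⟨y, hy, hz⟩ := h
      exact ⟨y, part_map_mono (ihf x) hy, part_map_mono (ihg x) hz⟩
  | comp cf cg ihf ihg =>
      intro x a h
      simp only [evalo] at h ⊢
      erw [Part.bind_eq_bind, Part.mem_bind_iff] at h ⊢
      obtain ⟨y, hy, hz⟩ := h
      exact ⟨y, ihg _ _ hy, ihf _ _ hz⟩
  | prec cf cg ihf ihg =>
      intro x
      simp only [evalo, Nat.unpaired]
      generalize x.unpair.1 = A
      generalize x.unpair.2 = N
      induction N with
      | zero => exact fun a h => ihf _ _ h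
      | succ n ih =>
          intro a h
          replace h : a ∈ (Nat.rec (evalo O cf A) (fun y IH => IH >>= fun i =>
              evalo O cg (Nat.pair A (Nat.pair y i))) n : Part ℕ) >>= fun i =>
              evalo O cg (Nat.pair A (Nat.pair n i)) := h
          show a ∈ (Nat.rec (evalo O' cf A) (fun y IH => IH >>= fun i =>
              evalo O' cg (Nat.pair A (Nat.pair y i))) n : Part ℕ) >>= fun i =>
              evalo O' cg (Nat.pair A (Nat.pair n i))
          rw [Part.bind_eq_bind, Part.mem_bind_iff] at h ⊢
          obtain ⟨i, hi, hg2⟩ := h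
          exact ⟨i, ih _ hi, ihg _ _ hg2⟩
  | rfind' cf ihf =>
      intro x a h
      simp only [evalo, Nat.unpaired] at h ⊢
      rw [Part.mem_map_iff] at h ⊢
      obtain ⟨y, hy, rfl⟩ := h
      refine ⟨y, ?_, rfl⟩
      erw [Nat.mem_rfind] at hy ⊢
      exact ⟨part_map_mono (ihf _) hy.1, fun {m} hm => part_map_mono (ihf _) (hy.2 hm)⟩
/-- Restriction of a total oracle to arguments `< k`. -/
def oRestr (o : ℕ → ℕ) (k : ℕ) : ℕ →. ℕ := fun n =>
  Part.assert (n < k) fun _ => Part.some (o n)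

theorem mem_oRestr {o : ℕ → ℕ} {k n a : ℕ} : a ∈ oRestr o k n ↔ n < k ∧ a = o n := by
  simp [oRestr, Part.mem_assert_iff, eq_comm]

theorem oRestr_le (o : ℕ → ℕ) (k : ℕ) : ∀ n a, a ∈ oRestr o k n → a ∈ toPFun o n := by
  intro n a h
  rw [mem_oRestr] at h
  simp [toPFun, h.2]

theorem oRestr_mono (o : ℕ → ℕ) {k k' : ℕ} (h : k ≤ k') :
    ∀ n a, a ∈ oRestr o k n → a ∈ oRestr o k' n := by
  intro n a ha
  rw [mem_oRestr] at ha ⊢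
  exact ⟨lt_of_lt_of_le ha.1 h, ha.2⟩

theorem evalo_prec_zero (O : ℕ →. ℕ) (cf cg : OCode) (A : ℕ) :
    evalo O (.prec cf cg) (Nat.pair A 0) = evalo O cf A := by
  simp [evalo]

theorem evalo_prec_succ (O : ℕ →. ℕ) (cf cg : OCode) (A n : ℕ) :
    evalo O (.prec cf cg) (Nat.pair A (n+1)) =
      (evalo O (.prec cf cg) (Nat.pair A n)).bind fun i =>
        evalo O cg (Nat.pair A (Nat.pair n i)) := by
  simp only [evalo, Nat.unpaired, Nat.unpair_pair]
  rfl

theorem evalo_rfind' (O : ℕ →. ℕ) (cf : OCode) (A m : ℕ) :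
    evalo O (.rfind' cf) (Nat.pair A m) =
      (Nat.rfind fun n => (fun x => x = 0) <$> evalo O cf (Nat.pair A (n + m))).map (· + m) := by
  simp [evalo]

theorem evalo_compact {o : ℕ → ℕ} :
    ∀ (c : OCode) (x a : ℕ), a ∈ evalo (toPFun o) c x → ∃ k, a ∈ evalo (oRestr o k) c x := by
  intro c
  induction c with
  | zero => exact fun x a h => ⟨0, h⟩
  | succ => exact fun x a h => ⟨0, h⟩
  | left => exact fun x a h => ⟨0, h⟩
  | right => exact fun x a h => ⟨0, h⟩
  | oracle =>
      intro x a h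
      refine ⟨x + 1, ?_⟩
      show a ∈ oRestr o (x+1) x
      rw [mem_oRestr]
      exact ⟨Nat.lt_succ_self x, Part.mem_some_iff.1 (show a ∈ Part.some (o x) from h)⟩
  | pair cf cg ihf ihg =>
      intro x a h
      simp only [evalo, Seq.seq] at h ⊢
      rw [Part.mem_bind_iff] at h
      obtain ⟨F, hF, ha⟩ := h
      rw [Part.map_eq_map, Part.mem_map_iff] at hF
      obtain ⟨y, hy, rfl⟩ := hF
      rw [Part.mem_map_iff] at ha
      obtain ⟨z, hz, rfl⟩ := ha
      obtain ⟨k1, hk1⟩ := ihf _ _ hy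
      obtain ⟨k2, hk2⟩ := ihg _ _ hz
      refine ⟨max k1 k2, ?_⟩
      rw [Part.mem_bind_iff]
      refine ⟨Nat.pair y, ?_, ?_⟩
      · rw [Part.map_eq_map, Part.mem_map_iff]
        exact ⟨y, evalo_mono (oRestr_mono o (le_max_left k1 k2)) _ _ _ hk1, rfl⟩
      · rw [Part.mem_map_iff]
        exact ⟨z, evalo_mono (oRestr_mono o (le_max_right k1 k2)) _ _ _ hk2, rfl⟩
  | comp cf cg ihf ihg =>
      intro x a h
      simp only [evalo] at h ⊢
      erw [Part.bind_eq_bind, Part.mem_bind_iff] at h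
      obtain ⟨y, hy, hz⟩ := h
      obtain ⟨k1, hk1⟩ := ihg _ _ hy
      obtain ⟨k2, hk2⟩ := ihf _ _ hz
      refine ⟨max k1 k2, ?_⟩
      erw [Part.bind_eq_bind, Part.mem_bind_iff]
      exact ⟨y, evalo_mono (oRestr_mono o (le_max_left k1 k2)) _ _ _ hk1,
        evalo_mono (oRestr_mono o (le_max_right k1 k2)) _ _ _ hk2⟩
  | prec cf cg ihf ihg =>
      intro x
      obtain ⟨A, N, rfl⟩ : ∃ A N, x = Nat.pair A N := ⟨_, _, (Nat.pair_unpair x).symm⟩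
      induction N with
      | zero =>
          intro a h
          rw [evalo_prec_zero] at h
          obtain ⟨k, hk⟩ := ihf _ _ h
          exact ⟨k, by rw [evalo_prec_zero]; exact hk⟩
      | succ n ihn =>
          intro a h
          rw [evalo_prec_succ, Part.mem_bind_iff] at h
          obtain ⟨i, hi, hg2⟩ := h
          obtain ⟨k1, hk1⟩ := ihn _ hi
          obtain ⟨k2, hk2⟩ := ihg _ _ hg2
          refine ⟨max k1 k2, ?_⟩
          rw [evalo_prec_succ, Part.mem_bind_iff]
          exact ⟨i, evalo_mono (oRestr_mono o (le_max_left k1 k2)) _ _ _ hk1,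
            evalo_mono (oRestr_mono o (le_max_right k1 k2)) _ _ _ hk2⟩
  | rfind' cf ihf =>
      intro x a h
      obtain ⟨A, m, rfl⟩ : ∃ A m, x = Nat.pair A m := ⟨_, _, (Nat.pair_unpair x).symm⟩
      rw [evalo_rfind', Part.mem_map_iff] at h
      obtain ⟨y, hy, rfl⟩ := h
      induction y generalizing m with
      | zero =>
          erw [Nat.mem_rfind] at hy
          have h1 := hy.1
          rw [Part.map_eq_map, Part.mem_map_iff] at h1
          obtain ⟨v, hv, hv0⟩ := h1
          obtain ⟨k, hk⟩ := ihf _ _ hv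
          refine ⟨k, ?_⟩
          rw [evalo_rfind', Part.mem_map_iff]
          refine ⟨0, Nat.mem_rfind.2 ⟨?_, fun hm => absurd hm (Nat.not_lt_zero _)⟩, rfl⟩
          rw [Part.map_eq_map, Part.mem_map_iff]
          exact ⟨v, hk, hv0⟩
      | succ y ihy =>
          erw [Nat.mem_rfind] at hy
          have h2 := hy.2 (show 0 < y + 1 from Nat.succ_pos y)
          rw [Part.map_eq_map, Part.mem_map_iff] at h2
          obtain ⟨v0, hv0, hv0ne⟩ := h2
          obtain ⟨k0, hk0⟩ := ihf _ _ hv0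
          have hy' : y ∈ Nat.rfind (fun n =>
              (fun v => v = 0) <$> evalo (toPFun o) cf (Nat.pair A (n + (m+1)))) := by
            erw [Nat.mem_rfind]
            constructor
            · have h1 := hy.1
              rwa [show y + 1 + m = y + (m + 1) from by omega] at h1
            · intro j hj
              have h2' := hy.2 (show j + 1 < y + 1 from Nat.succ_lt_succ hj)
              rwa [show j + 1 + m = j + (m + 1) from by omega] at h2'
          obtain ⟨k1, hk1⟩ := ihy (m+1) hy'
          refine ⟨max k0 k1, ?_⟩
          have hk1' := evalo_mono (oRestr_mono o (le_max_right k0 k1)) _ _ _ hk1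
          rw [evalo_rfind', Part.mem_map_iff] at hk1'
          obtain ⟨y', hy'm, heq⟩ := hk1'
          rw [show y' = y from by omega] at hy'm
          rw [evalo_rfind', Part.mem_map_iff]
          refine ⟨y+1, Nat.mem_rfind.2 ⟨?_, ?_⟩, by omega⟩
          · have h3 := Nat.rfind_spec hy'm
            rwa [show y + (m + 1) = y + 1 + m from by omega] at h3
          · intro j hj
            cases j with
            | zero =>
                rw [Part.map_eq_map, Part.mem_map_iff]
                exact ⟨v0, evalo_mono (oRestr_mono o (le_max_left k0 k1)) _ _ _ hk0, hv0ne⟩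
            | succ j =>
                have h4 := Nat.rfind_min hy'm (show j < y from Nat.lt_of_succ_lt_succ hj)
                rwa [show j + (m + 1) = j + 1 + m from by omega] at h4
/-! ### A universal plain code interpreting `evalo` with finite coded-list oracles -/

open Nat.Partrec (Code)
open Nat.Partrec.Code

/-- The finite oracle coded by the number `l` (via `Denumerable.ofNat (List ℕ) l`). -/
def listOrN (l : ℕ) : ℕ →. ℕ := fun x =>
  Part.ofOption ((Denumerable.ofNat (List ℕ) l)[x]?)

theorem listOrN_encode (o : ℕ → ℕ) (k : ℕ) :
    listOrN (Encodable.encode ((List.range k).map o)) = oRestr o k := by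
  funext x
  simp only [listOrN, Denumerable.ofNat_encode, oRestr]
  by_cases h : x < k
  · simp [List.getElem?_map, List.getElem?_range h, Part.assert_pos h]
  · rw [List.getElem?_eq_none (by simpa using not_lt.1 h),
      Part.assert_neg h]
    rfl

/-- An `ite` for partial recursive functions. -/
theorem partrec_bif {α σ : Type*} [Primcodable α] [Primcodable σ] {c : α → Bool} {f g : α →. σ}
    (hc : Computable c) (hf : Partrec f) (hg : Partrec g) :
    Partrec fun a => bif c a then f a else g a := by
  obtain ⟨cf, ef⟩ := exists_code.1 hf
  obtain ⟨cg, eg⟩ := exists_code.1 hg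
  set d : ℕ → Bool := fun n =>
    Option.casesOn (motive := fun _ => Bool) (Encodable.decode (α := α) n) false c with hd_def
  have hdB : Computable d :=
    Computable.option_casesOn Computable.decode (Computable.const false)
      (hc.comp Computable.snd).to₂
  have hcode : Computable fun n : ℕ => bif d n then cf else cg :=
    Computable.cond hdB (Computable.const cf) (Computable.const cg)
  have main : Partrec fun n : ℕ => eval (bif d n then cf else cg) n :=
    eval_part.comp hcode Computable.id
  show Nat.Partrec fun n =>
    Part.bind (Encodable.decode (α := α) n) fun a =>
      ((bif c a then f a else g a).map Encodable.encode)
  refine (Partrec.nat_iff.1 main).of_eq fun n => ?_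
  rcases hdec : (Encodable.decode (α := α) n) with _ | a
  · have hd : d n = false := by simp [hd_def, hdec]
    rw [hd, show (bif false then cf else cg) = cg from rfl, eg]
    simp [hdec]
  · have hd : d n = c a := by simp [hd_def, hdec]
    rw [hd]
    cases hca : c a
    · rw [show (bif false then cf else cg) = cg from rfl, eg]
      simp [hdec, hca]
    · rw [show (bif true then cf else cg) = cf from rfl, ef]
      simp [hdec, hca]

def tl (t : ℕ) : ℕ := t.unpair.1
def te (t : ℕ) : ℕ := t.unpair.2.unpair.1
def tx (t : ℕ) : ℕ := t.unpair.2.unpair.2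
def tc1 (t : ℕ) : ℕ := ((te t - 5) / 4).unpair.1
def tc2 (t : ℕ) : ℕ := ((te t - 5) / 4).unpair.2
def mkT (l e x : ℕ) : ℕ := Nat.pair l (Nat.pair e x)

/-- `w = pair M a` with `M = pair s (pair l (pair c1 c2))`; computes `eval s ⟨l, c1, a⟩`. -/
def uf : ℕ →. ℕ := fun w =>
  eval (Denumerable.ofNat Code w.unpair.1.unpair.1)
    (mkT w.unpair.1.unpair.2.unpair.1 w.unpair.1.unpair.2.unpair.2.unpair.1 w.unpair.2)

/-- `z = pair (pair M a) (pair y i)`; computes `eval s ⟨l, c2, pair a (pair y i)⟩`. -/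
def ug : ℕ →. ℕ := fun z =>
  eval (Denumerable.ofNat Code z.unpair.1.unpair.1.unpair.1)
    (mkT z.unpair.1.unpair.1.unpair.2.unpair.1
      z.unpair.1.unpair.1.unpair.2.unpair.2.unpair.2
      (Nat.pair z.unpair.1.unpair.2 z.unpair.2))

/-- `w = pair (pair M a) v`; computes `eval s ⟨l, c1, pair a v⟩`. -/
def uh : ℕ →. ℕ := fun w =>
  eval (Denumerable.ofNat Code w.unpair.1.unpair.1.unpair.1)
    (mkT w.unpair.1.unpair.1.unpair.2.unpair.1
      w.unpair.1.unpair.1.unpair.2.unpair.2.unpair.1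
      (Nat.pair w.unpair.1.unpair.2 w.unpair.2))

def uPrec : ℕ →. ℕ := Nat.unpaired fun a n =>
  n.rec (uf a) fun y IH => IH >>= fun i => ug (Nat.pair a (Nat.pair y i))

def uRf : ℕ →. ℕ := Nat.unpaired fun a m =>
  (Nat.rfind fun n => (fun m => m = 0) <$> uh (Nat.pair a (n + m))).map (· + m)

def mM (self : Code) (t : ℕ) : ℕ :=
  Nat.pair (Encodable.encode self) (Nat.pair (tl t) (Nat.pair (tc1 t) (tc2 t)))

def interpF (self : Code) (t : ℕ) : Part ℕ :=
  bif decide (te t = 0) then Part.some 0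
  else bif decide (te t = 1) then Part.some (tx t + 1)
  else bif decide (te t = 2) then Part.some (tx t).unpair.1
  else bif decide (te t = 3) then Part.some (tx t).unpair.2
  else bif decide (te t = 4) then listOrN (tl t) (tx t)
  else bif decide ((te t - 5) % 4 = 0) then
    (eval self (mkT (tl t) (tc1 t) (tx t))).bind fun u =>
      (eval self (mkT (tl t) (tc2 t) (tx t))).map fun v => Nat.pair u v
  else bif decide ((te t - 5) % 4 = 1) then
    (eval self (mkT (tl t) (tc2 t) (tx t))).bind fun u =>
      eval self (mkT (tl t) (tc1 t) u)
  else bif decide ((te t - 5) % 4 = 2) then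
    uPrec (Nat.pair (Nat.pair (mM self t) (tx t).unpair.1) (tx t).unpair.2)
  else uRf (Nat.pair (Nat.pair (mM self t) (tx t).unpair.1) (tx t).unpair.2)

theorem interpF_partrec : Partrec₂ interpF := by
  have pu1 : Primrec fun n : ℕ => n.unpair.1 := Primrec.fst.comp Primrec.unpair
  have pu2 : Primrec fun n : ℕ => n.unpair.2 := Primrec.snd.comp Primrec.unpair
  have pSnd : Primrec fun p : Code × ℕ => p.2 := Primrec.snd
  have ptl : Primrec fun p : Code × ℕ => tl p.2 := pu1.comp pSnd
  have pte : Primrec fun p : Code × ℕ => te p.2 := pu1.comp (pu2.comp pSnd)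
  have ptx : Primrec fun p : Code × ℕ => tx p.2 := pu2.comp (pu2.comp pSnd)
  have pdiv : Primrec fun p : Code × ℕ => (te p.2 - 5) / 4 :=
    Primrec.nat_div.comp (Primrec.nat_sub.comp pte (Primrec.const 5)) (Primrec.const 4)
  have pmod : Primrec fun p : Code × ℕ => (te p.2 - 5) % 4 :=
    Primrec.nat_mod.comp (Primrec.nat_sub.comp pte (Primrec.const 5)) (Primrec.const 4)
  have ptc1 : Primrec fun p : Code × ℕ => tc1 p.2 := pu1.comp pdiv
  have ptc2 : Primrec fun p : Code × ℕ => tc2 p.2 := pu2.comp pdiv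
  have pmM : Primrec fun p : Code × ℕ => mM p.1 p.2 :=
    Primrec₂.natPair.comp (Primrec.encode.comp Primrec.fst)
      (Primrec₂.natPair.comp ptl (Primrec₂.natPair.comp ptc1 ptc2))
  have hself : Computable fun p : Code × ℕ => p.1 := Computable.fst
  -- branch 5 : pair
  have hA1 : Computable fun p : Code × ℕ => mkT (tl p.2) (tc1 p.2) (tx p.2) :=
    (Primrec₂.natPair.comp ptl (Primrec₂.natPair.comp ptc1 ptx)).to_comp
  have hA2 : Computable fun p : Code × ℕ => mkT (tl p.2) (tc2 p.2) (tx p.2) :=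
    (Primrec₂.natPair.comp ptl (Primrec₂.natPair.comp ptc2 ptx)).to_comp
  have bpair : Partrec fun p : Code × ℕ =>
      (eval p.1 (mkT (tl p.2) (tc1 p.2) (tx p.2))).bind fun u =>
        (eval p.1 (mkT (tl p.2) (tc2 p.2) (tx p.2))).map fun v => Nat.pair u v := by
    refine (eval_part.comp hself hA1).bind ?_
    refine Partrec.map (eval_part.comp (hself.comp Computable.fst) (hA2.comp Computable.fst)) ?_
    exact (Primrec₂.natPair.comp (Primrec.snd.comp Primrec.fst) Primrec.snd).to_comp.to₂
  -- branch 6 : comp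
  have bcomp : Partrec fun p : Code × ℕ =>
      (eval p.1 (mkT (tl p.2) (tc2 p.2) (tx p.2))).bind fun u =>
        eval p.1 (mkT (tl p.2) (tc1 p.2) u) := by
    refine (eval_part.comp hself hA2).bind ?_
    exact (eval_part.comp (hself.comp Computable.fst)
      ((Primrec₂.natPair.comp (ptl.comp Primrec.fst)
        (Primrec₂.natPair.comp (ptc1.comp Primrec.fst) Primrec.snd)).to_comp)).to₂
  -- branches 7, 8 : prec, rfind'
  have huf : Partrec uf := by
    refine eval_part.comp ((Computable.ofNat Code).comp (pu1.comp pu1).to_comp) ?_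
    exact (Primrec₂.natPair.comp (pu1.comp (pu2.comp pu1))
      (Primrec₂.natPair.comp (pu1.comp (pu2.comp (pu2.comp pu1))) pu2)).to_comp
  have hug : Partrec ug := by
    refine eval_part.comp ((Computable.ofNat Code).comp (pu1.comp (pu1.comp pu1)).to_comp) ?_
    exact (Primrec₂.natPair.comp (pu1.comp (pu2.comp (pu1.comp pu1)))
      (Primrec₂.natPair.comp (pu2.comp (pu2.comp (pu2.comp (pu1.comp pu1))))
        (Primrec₂.natPair.comp (pu2.comp pu1) pu2))).to_comp
  have huh : Partrec uh := by
    refine eval_part.comp ((Computable.ofNat Code).comp (pu1.comp (pu1.comp pu1)).to_comp) ?_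
    exact (Primrec₂.natPair.comp (pu1.comp (pu2.comp (pu1.comp pu1)))
      (Primrec₂.natPair.comp (pu1.comp (pu2.comp (pu2.comp (pu1.comp pu1))))
        (Primrec₂.natPair.comp (pu2.comp pu1) pu2))).to_comp
  have hPrec : Nat.Partrec uPrec :=
    Nat.Partrec.prec (Partrec.nat_iff.1 huf) (Partrec.nat_iff.1 hug)
  have hRf : Nat.Partrec uRf := (Partrec.nat_iff.1 huh).rfind'
  have hargP : Computable fun p : Code × ℕ =>
      Nat.pair (Nat.pair (mM p.1 p.2) (tx p.2).unpair.1) (tx p.2).unpair.2 :=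
    (Primrec₂.natPair.comp (Primrec₂.natPair.comp pmM (pu1.comp ptx)) (pu2.comp ptx)).to_comp
  have bprec : Partrec fun p : Code × ℕ =>
      uPrec (Nat.pair (Nat.pair (mM p.1 p.2) (tx p.2).unpair.1) (tx p.2).unpair.2) :=
    (Partrec.nat_iff.2 hPrec).comp hargP
  have brf : Partrec fun p : Code × ℕ =>
      uRf (Nat.pair (Nat.pair (mM p.1 p.2) (tx p.2).unpair.1) (tx p.2).unpair.2) :=
    (Partrec.nat_iff.2 hRf).comp hargP
  -- oracle branch
  have b4 : Partrec fun p : Code × ℕ => listOrN (tl p.2) (tx p.2) :=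
    Computable.ofOption (Computable.list_getElem?.comp
      ((Computable.ofNat (List ℕ)).comp ptl.to_comp) ptx.to_comp)
  -- constants
  have b0 : Partrec fun _ : Code × ℕ => (Part.some 0 : Part ℕ) :=
    (Computable.const 0).partrec
  have b1 : Partrec fun p : Code × ℕ => (Part.some (tx p.2 + 1) : Part ℕ) :=
    ((Primrec.succ.comp ptx).to_comp).partrec
  have b2 : Partrec fun p : Code × ℕ => (Part.some (tx p.2).unpair.1 : Part ℕ) :=
    ((pu1.comp ptx).to_comp).partrec
  have b3 : Partrec fun p : Code × ℕ => (Part.some (tx p.2).unpair.2 : Part ℕ) :=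
    ((pu2.comp ptx).to_comp).partrec
  -- conditions
  have hceq : ∀ k : ℕ, Computable fun p : Code × ℕ => decide (te p.2 = k) := fun k =>
    (Primrec.eq.comp pte (Primrec.const k)).decide.to_comp
  have hcmod : ∀ k : ℕ, Computable fun p : Code × ℕ => decide ((te p.2 - 5) % 4 = k) := fun k =>
    (Primrec.eq.comp pmod (Primrec.const k)).decide.to_comp
  exact partrec_bif (hceq 0) b0 <| partrec_bif (hceq 1) b1 <| partrec_bif (hceq 2) b2 <|
    partrec_bif (hceq 3) b3 <| partrec_bif (hceq 4) b4 <| partrec_bif (hcmod 0) bpair <|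
    partrec_bif (hcmod 1) bcomp <| partrec_bif (hcmod 2) bprec brf
theorem part_seq_eq (p q : Part ℕ) :
    (Nat.pair <$> p <*> q) = p.bind fun u => q.map fun v => Nat.pair u v := by
  apply Part.ext
  intro b
  simp only [Seq.seq, Part.map_eq_map, Part.bind_eq_bind, Part.mem_bind_iff, Part.mem_map_iff]
  constructor
  · rintro ⟨F, ⟨u, hu, rfl⟩, v, hv, rfl⟩
    exact ⟨u, hu, v, hv, rfl⟩
  · rintro ⟨u, hu, v, hv, rfl⟩
    exact ⟨Nat.pair u, ⟨u, hu, rfl⟩, v, hv, rfl⟩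

theorem exists_univ : ∃ cU : Code, ∀ e l x,
    eval cU (Nat.pair l (Nat.pair e x)) = evalo (listOrN l) (OCode.ofNat e) x := by
  obtain ⟨cU, hcU⟩ := fixed_point₂ interpF_partrec
  refine ⟨cU, ?_⟩
  intro e
  induction e using Nat.strong_induction_on with
  | _ e IH =>
  intro l x
  rw [hcU]
  simp only [interpF, tl, te, tx, tc1, tc2, mM, mkT, Nat.unpair_pair]
  rcases e with _ | _ | _ | _ | _ | n
  · have h0 : OCode.ofNat 0 = OCode.zero := ofNat_encO OCode.zero
    rw [h0]; rfl
  · have h0 : OCode.ofNat 1 = OCode.succ := ofNat_encO OCode.succ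
    rw [h0]; rfl
  · have h0 : OCode.ofNat 2 = OCode.left := ofNat_encO OCode.left
    rw [h0]; rfl
  · have h0 : OCode.ofNat 3 = OCode.right := ofNat_encO OCode.right
    rw [h0]; rfl
  · have h0 : OCode.ofNat 4 = OCode.oracle := ofNat_encO OCode.oracle
    rw [h0]; rfl
  · have h5 : n + 5 - 5 = n := by omega
    have c0 : ((n:ℕ) + 5 = 0) = False := eq_false (by omega)
    have c1 : ((n:ℕ) + 5 = 1) = False := eq_false (by omega)
    have c2 : ((n:ℕ) + 5 = 2) = False := eq_false (by omega)
    have c3 : ((n:ℕ) + 5 = 3) = False := eq_false (by omega)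
    have c4 : ((n:ℕ) + 5 = 4) = False := eq_false (by omega)
    have hlt1 : (n/4).unpair.1 < n + 5 := by
      have h1 := Nat.unpair_left_le (n/4); have h2 := Nat.div_le_self n 4; omega
    have hlt2 : (n/4).unpair.2 < n + 5 := by
      have h1 := Nat.unpair_right_le (n/4); have h2 := Nat.div_le_self n 4; omega
    rcases (show n % 4 = 0 ∨ n % 4 = 1 ∨ n % 4 = 2 ∨ n % 4 = 3 by omega) with hm|hm|hm|hm
    · have hofn : OCode.ofNat (n+5) =
          .pair (OCode.ofNat (n/4).unpair.1) (OCode.ofNat (n/4).unpair.2) := by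
        rw [OCode.ofNat]; simp [hm]
      rw [hofn]
      simp only [h5, hm, c0, c1, c2, c3, c4, decide_false, decide_true, cond_false, cond_true]
      rw [show evalo (listOrN l) (.pair (OCode.ofNat (n/4).unpair.1) (OCode.ofNat (n/4).unpair.2)) x
        = Nat.pair <$> evalo (listOrN l) (OCode.ofNat (n/4).unpair.1) x <*>
            evalo (listOrN l) (OCode.ofNat (n/4).unpair.2) x from rfl, part_seq_eq]
      simp only [IH _ hlt1, IH _ hlt2]
    · have hofn : OCode.ofNat (n+5) =
          .comp (OCode.ofNat (n/4).unpair.1) (OCode.ofNat (n/4).unpair.2) := by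
        rw [OCode.ofNat]; simp [hm]
      rw [hofn]
      simp only [h5, hm, c0, c1, c2, c3, c4, decide_false, decide_true, cond_false, cond_true]
      have m0 : ((1:ℕ) = 0) = False := eq_false (by omega)
      have m1 : ((1:ℕ) = 1) = True := eq_true rfl
      simp only [m0, m1, decide_false, decide_true, cond_false, cond_true]
      erw [show evalo (listOrN l) (.comp (OCode.ofNat (n/4).unpair.1) (OCode.ofNat (n/4).unpair.2)) x
        = evalo (listOrN l) (OCode.ofNat (n/4).unpair.2) x >>=
            evalo (listOrN l) (OCode.ofNat (n/4).unpair.1) from rfl, Part.bind_eq_bind]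
      simp only [IH _ hlt1, IH _ hlt2]
    · have hofn : OCode.ofNat (n+5) =
          .prec (OCode.ofNat (n/4).unpair.1) (OCode.ofNat (n/4).unpair.2) := by
        rw [OCode.ofNat]; simp [hm]
      rw [hofn]
      simp only [h5, hm, c0, c1, c2, c3, c4, decide_false, decide_true, cond_false, cond_true]
      have m0 : ((2:ℕ) = 0) = False := eq_false (by omega)
      have m1 : ((2:ℕ) = 1) = False := eq_false (by omega)
      have m2 : ((2:ℕ) = 2) = True := eq_true rfl
      simp only [m0, m1, m2, decide_false, decide_true, cond_false, cond_true]
      simp only [evalo, Nat.unpaired, uPrec, uf, ug, mkT, Nat.unpair_pair,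
        Denumerable.ofNat_encode, IH _ hlt1, IH _ hlt2]
    · have hofn : OCode.ofNat (n+5) = .rfind' (OCode.ofNat (n/4).unpair.1) := by
        rw [OCode.ofNat]; simp [hm]
      rw [hofn]
      simp only [h5, hm, c0, c1, c2, c3, c4, decide_false, decide_true, cond_false, cond_true]
      have m0 : ((3:ℕ) = 0) = False := eq_false (by omega)
      have m1 : ((3:ℕ) = 1) = False := eq_false (by omega)
      have m2 : ((3:ℕ) = 2) = False := eq_false (by omega)
      simp only [m0, m1, m2, decide_false, decide_true, cond_false, cond_true]
      simp only [evalo, Nat.unpaired, uRf, uh, mkT, Nat.unpair_pair,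
        Denumerable.ofNat_encode, IH _ hlt1]
/-! ### Total codes, uniformly in a total oracle -/

def TotCodeU (q : (ℕ → ℕ) → ℕ → ℕ) : Prop :=
  ∃ c : OCode, ∀ (w : ℕ → ℕ) (x : ℕ), evalo (toPFun w) c x = Part.some (q w x)

theorem U_congr {q q' : (ℕ → ℕ) → ℕ → ℕ} (h : TotCodeU q) (e : ∀ w x, q w x = q' w x) :
    TotCodeU q' := by
  obtain ⟨c, hc⟩ := h
  exact ⟨c, fun w x => by rw [hc w x, e w x]⟩

theorem U_oracle : TotCodeU fun w => w := ⟨.oracle, fun w x => rfl⟩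

theorem U_computable {g : ℕ → ℕ} (h : Computable g) : TotCodeU fun _ => g := by
  obtain ⟨c, hc⟩ := exists_ocode_of_partrec (nat_partrec_of_computable h)
  exact ⟨c, fun w x => congrFun (hc (toPFun w)) x⟩

theorem U_comp {q r : (ℕ → ℕ) → ℕ → ℕ} (hq : TotCodeU q) (hr : TotCodeU r) :
    TotCodeU fun w x => q w (r w x) := by
  obtain ⟨cq, hcq⟩ := hq; obtain ⟨cr, hcr⟩ := hr
  refine ⟨.comp cq cr, fun w x => ?_⟩
  show evalo (toPFun w) cr x >>= evalo (toPFun w) cq = _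
  erw [hcr w x, Part.bind_eq_bind, Part.bind_some, hcq]

theorem U_pair {q r : (ℕ → ℕ) → ℕ → ℕ} (hq : TotCodeU q) (hr : TotCodeU r) :
    TotCodeU fun w x => Nat.pair (q w x) (r w x) := by
  obtain ⟨cq, hcq⟩ := hq; obtain ⟨cr, hcr⟩ := hr
  refine ⟨.pair cq cr, fun w x => ?_⟩
  show Nat.pair <$> evalo (toPFun w) cq x <*> evalo (toPFun w) cr x = _
  rw [hcq w x, hcr w x]
  simp [Seq.seq]

def cid : OCode := .pair .left .right

theorem evalo_cid (O : ℕ →. ℕ) (x : ℕ) : evalo O cid x = Part.some x := by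
  show Nat.pair <$> evalo O .left x <*> evalo O .right x = _
  show Nat.pair <$> Part.some x.unpair.1 <*> Part.some x.unpair.2 = _
  simp [Seq.seq]

theorem U_rec {q st : (ℕ → ℕ) → ℕ → ℕ} (hq : TotCodeU q) (hst : TotCodeU st) :
    TotCodeU fun w x => Nat.rec (q w x) (fun y ih => st w (Nat.pair y ih)) x := by
  obtain ⟨cq, hcq⟩ := hq; obtain ⟨cst, hcst⟩ := hst
  refine ⟨.comp (.prec cq (.comp cst .right)) (.pair cid cid), fun w x => ?_⟩
  have haux : ∀ (N A : ℕ), evalo (toPFun w) (.prec cq (.comp cst .right)) (Nat.pair A N) =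
      Part.some (Nat.rec (q w A) (fun y ih => st w (Nat.pair y ih)) N) := by
    intro N
    induction N with
    | zero => intro A; rw [evalo_prec_zero, hcq]; rfl
    | succ n ih =>
        intro A
        rw [evalo_prec_succ, ih A, Part.bind_some]
        show evalo (toPFun w) .right (Nat.pair A (Nat.pair n _)) >>= evalo (toPFun w) cst = _
        show Part.some (Nat.pair A (Nat.pair n _)).unpair.2 >>= evalo (toPFun w) cst = _
        erw [Nat.unpair_pair, Part.bind_eq_bind, Part.bind_some, hcst]
  show evalo (toPFun w) (.pair cid cid) x >>= evalo (toPFun w) (.prec cq (.comp cst .right)) = _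
  have h1 : evalo (toPFun w) (.pair cid cid) x = Part.some (Nat.pair x x) := by
    show Nat.pair <$> evalo (toPFun w) cid x <*> evalo (toPFun w) cid x = _
    rw [evalo_cid]
    simp [Seq.seq]
  erw [h1, Part.bind_eq_bind, Part.bind_some, haux]

theorem U_listOf {q : (ℕ → ℕ) → ℕ → ℕ} (hq : TotCodeU q) :
    TotCodeU fun w a => Encodable.encode ((List.range a).map (q w)) := by
  have pu1 : Primrec fun n : ℕ => n.unpair.1 := Primrec.fst.comp Primrec.unpair
  have pu2 : Primrec fun n : ℕ => n.unpair.2 := Primrec.snd.comp Primrec.unpair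
  have hA : Computable fun t : ℕ =>
      Encodable.encode ((Denumerable.ofNat (List ℕ) t.unpair.1) ++ [t.unpair.2]) :=
    (Primrec.encode.comp ((Primrec.list_append).comp
      ((Primrec.ofNat (List ℕ)).comp pu1)
      (Primrec.list_cons.comp pu2 (Primrec.const [])))).to_comp
  have hst : TotCodeU fun w z =>
      Encodable.encode ((Denumerable.ofNat (List ℕ)
        (Nat.pair z.unpair.2 (q w z.unpair.1)).unpair.1) ++
        [(Nat.pair z.unpair.2 (q w z.unpair.1)).unpair.2]) :=
    U_comp (U_computable hA)
      (U_pair (U_computable pu2.to_comp) (U_comp hq (U_computable pu1.to_comp)))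
  have hst' : TotCodeU fun w z =>
      Encodable.encode ((Denumerable.ofNat (List ℕ) z.unpair.2) ++ [q w z.unpair.1]) :=
    U_congr hst (fun w z => by rw [Nat.unpair_pair])
  have hrec := U_rec (U_computable (Computable.const (Encodable.encode ([] : List ℕ)))) hst'
  refine U_congr hrec fun w a => ?_
  induction a with
  | zero => rfl
  | succ a ih =>
      show Encodable.encode ((Denumerable.ofNat (List ℕ) (Nat.pair a _).unpair.2) ++
        [q w (Nat.pair a _).unpair.1]) = _
      rw [Nat.unpair_pair]
      dsimp only
      rw [ih, Denumerable.ofNat_encode, List.range_succ, List.map_append]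
      rfl
/-! ### The step-bounded halting indicator -/

def P3 (cU : Code) : ℕ → ℕ := fun t =>
  bif (Nat.Partrec.Code.evaln t.unpair.1.unpair.2 cU
    (Nat.pair t.unpair.2.unpair.2 (Nat.pair t.unpair.2.unpair.1 t.unpair.2.unpair.1))).isSome
  then 1 else 0

theorem P3_computable (cU : Code) : Computable (P3 cU) := by
  have pu1 : Primrec fun n : ℕ => n.unpair.1 := Primrec.fst.comp Primrec.unpair
  have pu2 : Primrec fun n : ℕ => n.unpair.2 := Primrec.snd.comp Primrec.unpair
  have pk : Primrec fun t : ℕ => t.unpair.1.unpair.2 := pu2.comp pu1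
  have pL : Primrec fun t : ℕ => t.unpair.2.unpair.2 := pu2.comp pu2
  have pn : Primrec fun t : ℕ => t.unpair.2.unpair.1 := pu1.comp pu2
  have harg : Primrec fun t : ℕ =>
      Nat.pair t.unpair.2.unpair.2 (Nat.pair t.unpair.2.unpair.1 t.unpair.2.unpair.1) :=
    Primrec₂.natPair.comp pL (Primrec₂.natPair.comp pn pn)
  have hev : Primrec fun t : ℕ => Nat.Partrec.Code.evaln t.unpair.1.unpair.2 cU
      (Nat.pair t.unpair.2.unpair.2 (Nat.pair t.unpair.2.unpair.1 t.unpair.2.unpair.1)) :=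
    primrec_evaln.comp ((pk.pair (Primrec.const cU)).pair harg)
  have hs : Primrec fun t : ℕ => (Nat.Partrec.Code.evaln t.unpair.1.unpair.2 cU
      (Nat.pair t.unpair.2.unpair.2 (Nat.pair t.unpair.2.unpair.1 t.unpair.2.unpair.1))).isSome :=
    Primrec.option_isSome.comp hev
  exact (Primrec.cond hs (Primrec.const 1) (Primrec.const 0)).to_comp

noncomputable def indX (X : Set ℕ) : ℕ → ℕ := fun n => X.indicator (fun _ => 1) n

theorem chi_eq (X : Set ℕ) : chi X = toPFun (indX X) := rfl

noncomputable def hfun (X : Set ℕ) (cU : Code) (n : ℕ) : ℕ → ℕ := fun m =>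
  P3 cU (Nat.pair m (Nat.pair n (Encodable.encode ((List.range m.unpair.1).map (indX X)))))

theorem hfun_spec (X : Set ℕ) (cU : Code)
    (hU : ∀ e l x, eval cU (Nat.pair l (Nat.pair e x)) = evalo (listOrN l) (OCode.ofNat e) x)
    (n : ℕ) : (∃ m, hfun X cU n m = 1) ↔ (phi (chi X) n n).Dom := by
  constructor
  · rintro ⟨m, hm⟩
    unfold hfun P3 at hm
    simp only [Nat.unpair_pair] at hm
    set L := Encodable.encode ((List.range m.unpair.1).map (indX X)) with hL
    cases hb : (Nat.Partrec.Code.evaln m.unpair.2 cU (Nat.pair L (Nat.pair n n))).isSome with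
    | false => rw [hb] at hm; exact absurd hm (by norm_num)
    | true =>
        obtain ⟨v, hv⟩ := Option.isSome_iff_exists.1 hb
        have hv' : v ∈ eval cU (Nat.pair L (Nat.pair n n)) := evaln_sound hv
        rw [hU, hL, listOrN_encode] at hv'
        have hmem := evalo_mono (oRestr_le (indX X) _) _ _ _ hv'
        exact Part.dom_iff_mem.2 ⟨v, hmem⟩
  · intro hdom
    obtain ⟨v, hv⟩ := Part.dom_iff_mem.1 hdom
    obtain ⟨k, hk⟩ := evalo_compact _ _ _
      (show v ∈ evalo (toPFun (indX X)) (OCode.ofNat n) n from hv)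
    rw [← listOrN_encode, ← hU] at hk
    obtain ⟨b, hb⟩ := evaln_complete.1 hk
    refine ⟨Nat.pair k b, ?_⟩
    unfold hfun P3
    simp only [Nat.unpair_pair]
    rw [show Nat.Partrec.Code.evaln b cU
      (Nat.pair (Encodable.encode ((List.range k).map (indX X))) (Nat.pair n n)) = some v from hb]
    rfl

/-! ### Helpers for `K₂` applications -/

theorem mem_partToTotal {ψ : ℕ →. ℕ} {u : ℕ → ℕ} (h : ∀ x, ψ x = Part.some (u x)) :
    u ∈ partToTotal ψ := by
  have H : ∀ n, (ψ n).Dom := fun n => by rw [h n]; trivial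
  exact ⟨H, funext fun n => Part.get_eq_of_mem (by rw [h n]; exact Part.mem_some _) (H n)⟩

theorem mem_k2XApp_of {X : Set ℕ} (g h : K2el X) {u : ℕ → ℕ}
    (hu : ∀ x, phi (pjoin (toPFun g.1) (toPFun h.1)) (g.1 0) x = Part.some (u x))
    (hrec : RecursiveIn (chi X) (toPFun u)) :
    (⟨u, hrec⟩ : K2el X) ∈ k2XApp X g h := by
  show _ ∈ (k2App g.1 h.1).bind _
  rw [Part.mem_bind_iff]
  exact ⟨u, mem_partToTotal hu, Part.mem_assert_iff.2 ⟨hrec, Part.mem_some _⟩⟩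

theorem pjoin_toPFun (a b : ℕ → ℕ) :
    pjoin (toPFun a) (toPFun b) = toPFun fun k => if k % 2 = 0 then a (k/2) else b (k/2) := by
  funext k
  unfold pjoin toPFun
  by_cases h : k % 2 = 0 <;> simp [h]

def cconst : ℕ → OCode := fun k => Nat.rec .zero (fun _ ih => .comp .succ ih) k

theorem evalo_cconst (O : ℕ →. ℕ) (k x : ℕ) : evalo O (cconst k) x = Part.some k := by
  induction k with
  | zero => rfl
  | succ k ih =>
      show evalo O (cconst k) x >>= evalo O .succ = _
      erw [ih, Part.bind_eq_bind, Part.bind_some]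
      rfl

theorem evalo_comp_eq (O : ℕ →. ℕ) (cf cg : OCode) (x : ℕ) :
    evalo O (.comp cf cg) x = (evalo O cg x).bind (evalo O cf) := by
  show _ >>= _ = _
  erw [Part.bind_eq_bind]

theorem evalo_right (O : ℕ →. ℕ) (z : ℕ) : evalo O .right z = Part.some z.unpair.2 := rfl

theorem P3_cases (cU : Code) (t : ℕ) : P3 cU t = 1 ∨ P3 cU t = 0 := by
  unfold P3
  cases (Nat.Partrec.Code.evaln t.unpair.1.unpair.2 cU
    (Nat.pair t.unpair.2.unpair.2 (Nat.pair t.unpair.2.unpair.1 t.unpair.2.unpair.1))).isSome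
  · right; rfl
  · left; rfl
set_option maxHeartbeats 1000000 in
theorem stmt10 (X Y : Set ℕ)
    (f : K2el X → ℕ) (hf : IsPCAEmbedding (k2XApp X) (k1App Y) f) :
    TuringLE (jump X) Y := by
  classical
  obtain ⟨cU, hU⟩ := exists_univ
  have pu1c : Computable fun n : ℕ => n.unpair.1 :=
    (Primrec.fst.comp Primrec.unpair).to_comp
  have hconst : ∀ n : ℕ, RecursiveIn (chi X) (toPFun fun _ => n) := fun n =>
    recursiveIn_of_computable (Computable.const n) _
  set cEl : ℕ → K2el X := fun n => ⟨fun _ => n, hconst n⟩ with hcEl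
  -- the successor element
  have hH0 := U_comp (U_computable Computable.succ)
    (U_comp U_oracle (U_computable (Computable.const 1)))
  obtain ⟨cH, hcH⟩ : TotCodeU fun w _ => w 1 + 1 := U_congr hH0 fun w x => rfl
  set eH : ℕ := encO cH with heH
  have happH : ∀ n : ℕ, cEl (n+1) ∈ k2XApp X (cEl eH) (cEl n) := by
    intro n
    refine mem_k2XApp_of (cEl eH) (cEl n) (fun x => ?_) (hconst (n+1))
    show evalo (pjoin (toPFun fun _ => eH) (toPFun fun _ => n)) (OCode.ofNat eH) x =
      Part.some (n+1)
    rw [pjoin_toPFun, show OCode.ofNat eH = cH from ofNat_encO cH, hcH]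
    norm_num
  -- the halting-approximation element G
  have hsched : Computable fun i : ℕ => 2*i+2 :=
    (Primrec.succ.comp (Primrec.succ.comp
      (Primrec.nat_mul.comp (Primrec.const 2) Primrec.id))).to_comp
  have hG0 := U_comp (U_computable (P3_computable cU))
    (U_pair (U_computable Computable.id)
      (U_pair (U_comp U_oracle (U_computable (Computable.const 1)))
        (U_comp (U_listOf (U_comp U_oracle (U_computable hsched)))
          (U_computable pu1c))))
  obtain ⟨cG, hcG⟩ : TotCodeU fun w x => P3 cU (Nat.pair x (Nat.pair (w 1)
      (Encodable.encode ((List.range x.unpair.1).map fun i => w (2*i+2))))) :=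
    U_congr hG0 fun w x => rfl
  set eG : ℕ := encO cG with heG
  set ωG : ℕ → ℕ := fun k => Nat.rec eG (fun y _ => indX X y) k with hωG
  have hGrec : RecursiveIn (chi X) (toPFun ωG) := by
    have h0 := U_rec (U_computable (Computable.const eG))
      (U_comp U_oracle (U_computable pu1c))
    have h1 : TotCodeU fun w k => Nat.rec eG (fun y _ => w y) k := by
      refine U_congr h0 fun w k => ?_
      induction k with
      | zero => rfl
      | succ k ih =>
          show w (Nat.pair k _).unpair.1 = w k
          rw [Nat.unpair_pair]
    obtain ⟨c, hc⟩ := h1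
    exact ⟨c, funext fun k => hc (indX X) k⟩
  set GEl : K2el X := ⟨ωG, hGrec⟩ with hGEl
  have hhrec : ∀ n, RecursiveIn (chi X) (toPFun (hfun X cU n)) := by
    intro n
    have h00 := U_comp (U_computable (P3_computable cU))
      (U_pair (U_computable Computable.id)
        (U_pair (U_computable (Computable.const n))
          (U_comp (U_listOf U_oracle) (U_computable pu1c))))
    have h1 : TotCodeU fun w m => P3 cU (Nat.pair m (Nat.pair n
        (Encodable.encode ((List.range m.unpair.1).map w)))) :=
      U_congr h00 fun w m => rfl
    obtain ⟨c, hc⟩ := h1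
    exact ⟨c, funext fun m => hc (indX X) m⟩
  set hEl : ℕ → K2el X := fun n => ⟨hfun X cU n, hhrec n⟩ with hhEl
  have happG : ∀ n, hEl n ∈ k2XApp X GEl (cEl n) := by
    intro n
    refine mem_k2XApp_of GEl (cEl n) (fun x => ?_) (hhrec n)
    show evalo (pjoin (toPFun ωG) (toPFun fun _ => n)) (OCode.ofNat (ωG 0)) x =
      Part.some (hfun X cU n x)
    rw [show ωG 0 = eG from rfl, pjoin_toPFun,
      show OCode.ofNat eG = cG from ofNat_encO cG,
      hcG (fun k => if k % 2 = 0 then ωG (k/2) else (fun _ => n) (k/2)) x]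
    simp only []
    have e1 : (if 1 % 2 = 0 then ωG (1/2) else n) = n := by norm_num
    have e2 : (fun i => if (2*i+2) % 2 = 0 then ωG ((2*i+2)/2) else n) = indX X := by
      funext i
      rw [if_pos (show (2*i+2) % 2 = 0 by omega), show (2*i+2)/2 = i+1 by omega]
    rw [e1, e2]
    rfl
  -- embedding consequences
  have embH : ∀ n, phi (chi Y) (f (cEl eH)) (f (cEl n)) = Part.some (f (cEl (n+1))) :=
    fun n => Part.eq_some_iff.2 (hf.2 _ _ _ (happH n))
  have embG : ∀ n, phi (chi Y) (f GEl) (f (cEl n)) = Part.some (f (hEl n)) :=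
    fun n => Part.eq_some_iff.2 (hf.2 _ _ _ (happG n))
  -- characterization of the jump
  have hchar : ∀ n, (n ∈ jump X ↔ f (hEl n) ≠ f (cEl 0)) := by
    intro n
    have hjn : n ∈ jump X ↔ (phi (chi X) n n).Dom := Iff.rfl
    rw [hjn, ← hfun_spec X cU hU n]
    constructor
    · rintro ⟨m, hm⟩ hfe
      have heq : hEl n = cEl 0 := hf.1 hfe
      have h2 : hfun X cU n m = 0 := by
        have h3 := congrArg (fun g : K2el X => g.1 m) heq
        simpa [hhEl, hcEl] using h3
      omega
    · intro hne
      by_contra hno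
      push_neg at hno
      apply hne
      have heq : hEl n = cEl 0 := by
        apply Subtype.ext
        funext m
        rcases P3_cases cU (Nat.pair m (Nat.pair n
            (Encodable.encode ((List.range m.unpair.1).map (indX X))))) with h | h
        · exact absurd h (hno m)
        · exact h
      rw [heq]
  -- the equality test code
  obtain ⟨cEqc, hEqc⟩ := exists_ocode_of_partrec (nat_partrec_of_computable
    (show Computable fun v : ℕ => if v = f (cEl 0) then 0 else 1 from
      (Primrec.ite (Primrec.eq.comp Primrec.id (Primrec.const (f (cEl 0))))
        (Primrec.const 0) (Primrec.const 1)).to_comp))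
  -- the iteration code
  set cIterPre : OCode := .prec (cconst (f (cEl 0)))
    (.comp (OCode.ofNat (f (cEl eH))) (.comp .right .right)) with hcIterPre
  have hIterPre : ∀ n, evalo (chi Y) cIterPre (Nat.pair 0 n) = Part.some (f (cEl n)) := by
    intro n
    induction n with
    | zero => rw [hcIterPre, evalo_prec_zero, evalo_cconst]
    | succ n ih =>
        rw [hcIterPre] at ih ⊢
        erw [evalo_prec_succ, ih, Part.bind_some, evalo_comp_eq, evalo_comp_eq,
          evalo_right, Part.bind_some, evalo_right, Part.bind_some, Nat.unpair_pair,
          Nat.unpair_pair]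
        exact embH n
  set cIter : OCode := .comp cIterPre (.pair .zero cid) with hcIter
  have hIter : ∀ n, evalo (chi Y) cIter n = Part.some (f (cEl n)) := by
    intro n
    rw [hcIter, evalo_comp_eq]
    have hpz : evalo (chi Y) (.pair .zero cid) n = Part.some (Nat.pair 0 n) := by
      show Nat.pair <$> evalo (chi Y) .zero n <*> evalo (chi Y) cid n = _
      rw [evalo_cid, show evalo (chi Y) .zero n = Part.some 0 from rfl]
      simp [Seq.seq]
    erw [hpz, Part.bind_some, hIterPre]
  refine ⟨.comp cEqc (.comp (OCode.ofNat (f GEl)) cIter), ?_⟩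
  funext n
  erw [evalo_comp_eq, evalo_comp_eq, hIter, Part.bind_some,
    show evalo (chi Y) (OCode.ofNat (f GEl)) (f (cEl n)) = Part.some (f (hEl n)) from embG n,
    Part.bind_some, hEqc (chi Y)]
  show Part.some (if f (hEl n) = f (cEl 0) then 0 else 1) = chi (jump X) n
  unfold chi
  congr 1
  by_cases hn : n ∈ jump X
  · rw [if_neg ((hchar n).1 hn), Set.indicator_of_mem hn]
  · have hfe : f (hEl n) = f (cEl 0) := by
      by_contra hne
      exact hn ((hchar n).2 hne)
    rw [if_pos hfe, Set.indicator_of_notMem hn]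
end PCAEmb
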